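/- Let X̃ be the two-sided Jacobi matrix with ω n = 1/2 and α n = 0 for all n ∈ ℤ, i.e. X̃ e_n = (e_{n+1} + e_{n−1})/√2. Then for every natural number m, ⟨X̃^m e_0, e_0⟩ = ∫_{−√2}^{√2} x^m/(π√(2−x²)) dx, the m-th moment of the arcsine law. -/
import Mathlib


/-- The two-sided Jacobi matrix of sequences `(ω, α)` indexed by `ℤ`, acting on finitely
supported real sequences: `X e_n = √(ω n)·e_{n+1} + α n·e_n + √(ω (n-1))·e_{n-1}`. -/
noncomputable def jacobiOpZ (ω α : ℤ → ℝ) : (ℤ →₀ ℝ) →ₗ[ℝ] (ℤ →₀ ℝ) :=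
  Finsupp.lsum ℝ fun n => LinearMap.toSpanSingleton ℝ (ℤ →₀ ℝ)
    (Real.sqrt (ω n) • Finsupp.single (n + 1) 1 + α n • Finsupp.single n 1 +
      Real.sqrt (ω (n - 1)) • Finsupp.single (n - 1) 1)

lemma jacobi_single (n : ℤ) :
    jacobiOpZ (fun _ => 1/2) (fun _ => 0) (Finsupp.single n 1) =
      Real.sqrt (1/2) • (Finsupp.single (n+1) 1 + Finsupp.single (n-1) 1) := by
  rw [jacobiOpZ, Finsupp.lsum_single, LinearMap.toSpanSingleton_apply]
  simp [smul_add]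

open Finset in
lemma key_sum (m : ℕ) :
    ∑ j ∈ range (m+1), (m.choose j : ℝ) •
        (Finsupp.single ((m:ℤ) - 2*j + 1) (1:ℝ) + Finsupp.single ((m:ℤ) - 2*j - 1) 1)
      = ∑ j ∈ range (m+2), (((m+1).choose j : ℝ)) • Finsupp.single (((m:ℤ) + 1) - 2*j) (1:ℝ) := by
  set u : ℕ → (ℤ →₀ ℝ) := fun j => Finsupp.single (((m:ℤ) + 1) - 2*j) (1:ℝ) with hu
  have h1 : ∀ j : ℕ, Finsupp.single ((m:ℤ) - 2*j + 1) (1:ℝ) = u j := by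
    intro j; simp only [hu]; congr 1; push_cast; ring
  have h2 : ∀ j : ℕ, Finsupp.single ((m:ℤ) - 2*j - 1) (1:ℝ) = u (j+1) := by
    intro j; simp only [hu]; congr 1; push_cast; ring
  simp only [h1, h2, smul_add, sum_add_distrib]
  rw [Finset.sum_range_succ' (fun j => (((m+1).choose j : ℝ)) • u j)]
  have h3 : ∀ j ∈ range (m+1), (((m+1).choose (j+1) : ℝ)) • u (j+1)
      = (m.choose j : ℝ) • u (j+1) + (m.choose (j+1) : ℝ) • u (j+1) := by
    intro j _; rw [Nat.choose_succ_succ]; push_cast; rw [add_smul]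
  rw [Finset.sum_congr rfl h3, sum_add_distrib]
  have h4 : ∑ j ∈ range (m+1), (m.choose (j+1) : ℝ) • u (j+1) + ((m+1).choose 0 : ℝ) • u 0
      = ∑ j ∈ range (m+2), (m.choose j : ℝ) • u j := by
    rw [Finset.sum_range_succ' (fun j => (m.choose j : ℝ) • u j)]
    norm_num
  have h5 : (m.choose (m+1) : ℝ) = 0 := by simp [Nat.choose_eq_zero_of_lt]
  rw [add_assoc, h4, Finset.sum_range_succ (fun j => (m.choose j : ℝ) • u j) (m+1), h5,
    zero_smul, add_zero, add_comm]

open Finset in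
lemma jacobi_pow (m : ℕ) :
    (jacobiOpZ (fun _ => 1/2) (fun _ => 0) ^ m) (Finsupp.single (0:ℤ) 1) =
      (Real.sqrt (1/2)) ^ m •
        ∑ j ∈ range (m+1), (m.choose j : ℝ) • Finsupp.single ((m:ℤ) - 2*j) (1:ℝ) := by
  induction m with
  | zero => simp
  | succ m ih =>
    rw [pow_succ', Module.End.mul_apply, ih, map_smul, map_sum]
    simp only [map_smul, jacobi_single]
    rw [show (∑ j ∈ range (m+1), (m.choose j : ℝ) • Real.sqrt (1/2) •
        (Finsupp.single ((m:ℤ) - 2*j + 1) (1:ℝ) + Finsupp.single ((m:ℤ) - 2*j - 1) 1))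
      = Real.sqrt (1/2) • ∑ j ∈ range (m+1), (m.choose j : ℝ) •
        (Finsupp.single ((m:ℤ) - 2*j + 1) (1:ℝ) + Finsupp.single ((m:ℤ) - 2*j - 1) 1) by
        rw [Finset.smul_sum]; exact Finset.sum_congr rfl fun j _ => smul_comm _ _ _]
    rw [key_sum, smul_smul, ← pow_succ]
    norm_num

noncomputable def arcA (m : ℕ) : ℝ := if Even m then (m.choose (m/2) : ℝ) / 2 ^ (m/2) else 0

open Finset in
lemma lhs_eq (m : ℕ) :
    ((jacobiOpZ (fun _ => 1/2) (fun _ => 0) ^ m) (Finsupp.single (0 : ℤ) 1)) 0 = arcA m := by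
  rw [jacobi_pow, Finsupp.smul_apply, Finsupp.finset_sum_apply]
  simp only [Finsupp.smul_apply, Finsupp.single_apply, smul_eq_mul]
  rcases Nat.even_or_odd m with ⟨k, hk⟩ | ⟨k, hk⟩
  · subst hk
    have hcong : ∀ j ∈ range (k+k+1),
        (((k+k).choose j : ℝ) * (if ((k+k : ℕ):ℤ) - 2*j = 0 then (1:ℝ) else 0))
          = if j = k then ((k+k).choose j : ℝ) else 0 := by
      intro j _
      by_cases h : j = k
      · subst h; rw [if_pos (by push_cast; ring), if_pos rfl, mul_one]
      · rw [if_neg (by omega), if_neg h, mul_zero]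
    rw [Finset.sum_congr rfl hcong, Finset.sum_ite_eq' (range (k+k+1)) k]
    rw [if_pos (by simp)]
    have hc : Real.sqrt (1/2) ^ (k+k) = (1/2 : ℝ)^k := by
      rw [← two_mul, pow_mul, Real.sq_sqrt (by norm_num)]
    rw [hc, arcA, if_pos ⟨k, rfl⟩]
    have : (k+k)/2 = k := by omega
    rw [this, div_pow, one_pow, div_mul_eq_mul_div, one_mul,
      div_eq_div_iff (by positivity) (by positivity)]
    try ring
  · have hcong : ∀ j ∈ range (m+1),
        ((m.choose j : ℝ) * (if ((m : ℕ):ℤ) - 2*j = 0 then (1:ℝ) else 0)) = 0 := by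
      intro j _
      rw [if_neg (by omega), mul_zero]
    rw [Finset.sum_congr rfl hcong, Finset.sum_const_zero, mul_zero, arcA,
      if_neg (by simp [hk, Nat.even_iff]; try omega)]

open Real MeasureTheory in
lemma sqrt2_sin_image :
    (fun θ : ℝ => Real.sqrt 2 * Real.sin θ) '' Set.Ioo (-(π/2)) (π/2)
      = Set.Ioo (-Real.sqrt 2) (Real.sqrt 2) := by
  have h2 : (0:ℝ) < Real.sqrt 2 := by positivity
  ext y
  constructor
  · rintro ⟨θ, hθ, rfl⟩
    have hs := Real.mapsTo_sin_Ioo hθ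
    obtain ⟨hs1, hs2⟩ := hs
    simp only [Set.mem_Ioo]
    constructor
    · nlinarith
    · nlinarith
  · rintro ⟨hy1, hy2⟩
    refine ⟨Real.arcsin (y / Real.sqrt 2), ⟨?_, ?_⟩, ?_⟩
    · exact Real.neg_pi_div_two_lt_arcsin.2 (by rw [lt_div_iff₀ h2]; linarith)
    · exact Real.arcsin_lt_pi_div_two.2 (by rw [div_lt_one h2]; linarith)
    · show Real.sqrt 2 * _ = y
      rw [Real.sin_arcsin (by rw [le_div_iff₀ h2]; linarith) (by rw [div_le_one h2]; linarith)]
      field_simp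

open Real MeasureTheory in
lemma rhs_transform (m : ℕ) :
    (∫ x in (-Real.sqrt 2)..(Real.sqrt 2), x ^ m / (Real.pi * Real.sqrt (2 - x ^ 2)))
      = (Real.sqrt 2)^m / π * ∫ x in (-(π/2))..(π/2), Real.sin x ^ m := by
  have h2 : (0:ℝ) < Real.sqrt 2 := by positivity
  have hpi : (0:ℝ) < π := Real.pi_pos
  rw [intervalIntegral.integral_of_le (by linarith), MeasureTheory.integral_Ioc_eq_integral_Ioo,
    ← sqrt2_sin_image]
  rw [integral_image_eq_integral_abs_deriv_smul measurableSet_Ioo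
    (fun θ _ => ((Real.hasDerivAt_sin θ).const_mul (Real.sqrt 2)).hasDerivWithinAt)
    (fun a ha b hb hab => Real.injOn_sin (Set.Ioo_subset_Icc_self ha)
      (Set.Ioo_subset_Icc_self hb) (mul_left_cancel₀ (ne_of_gt h2) hab))]
  rw [setIntegral_congr_fun measurableSet_Ioo (g := fun θ : ℝ => (Real.sqrt 2)^m / π * Real.sin θ ^ m)
    ?_]
  · rw [← MeasureTheory.integral_Ioc_eq_integral_Ioo,
      ← intervalIntegral.integral_of_le (by linarith), intervalIntegral.integral_const_mul]
  · intro θ hθ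
    have hcos : 0 < Real.cos θ := Real.cos_pos_of_mem_Ioo hθ
    have hsq : 2 - (Real.sqrt 2 * Real.sin θ)^2 = 2 * Real.cos θ ^ 2 := by
      have : Real.sqrt 2 ^ 2 = 2 := Real.sq_sqrt (by norm_num)
      have hpyth := Real.sin_sq_add_cos_sq θ
      nlinarith [this]
    have hsqrt : Real.sqrt (2 - (Real.sqrt 2 * Real.sin θ)^2) = Real.sqrt 2 * Real.cos θ := by
      rw [hsq, show (2:ℝ) * Real.cos θ ^2 = (Real.sqrt 2 * Real.cos θ)^2 by
        rw [mul_pow, Real.sq_sqrt] ; norm_num]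
      exact Real.sqrt_sq (by positivity)
    show |Real.sqrt 2 * Real.cos θ| • ((Real.sqrt 2 * Real.sin θ)^m / (π * Real.sqrt (2 - (Real.sqrt 2 * Real.sin θ)^2))) = _
    rw [hsqrt, abs_of_pos (by positivity), smul_eq_mul, mul_pow]
    field_simp

lemma arcA_step (m : ℕ) : arcA (m+2) = 2*((m:ℝ)+1)/((m:ℝ)+2) * arcA m := by
  rcases Nat.even_or_odd m with ⟨k, hk⟩ | hodd
  · subst hk
    have hcb := Nat.succ_mul_centralBinom_succ k
    rw [arcA, arcA, if_pos ⟨k+1, by ring⟩, if_pos ⟨k, rfl⟩]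
    have e1 : (k+k+2)/2 = k+1 := by omega
    have e2 : (k+k)/2 = k := by omega
    rw [e1, e2]
    have hc1 : (k+k+2).choose (k+1) = (k+1).centralBinom := by
      rw [Nat.centralBinom]; congr 1; ring
    have hc2 : (k+k).choose k = k.centralBinom := by
      rw [Nat.centralBinom]; congr 1; ring
    rw [hc1, hc2]
    have hcb' : ((k:ℝ)+1) * ((k+1).centralBinom : ℝ) = 2*(2*(k:ℝ)+1) * (k.centralBinom : ℝ) := by
      exact_mod_cast hcb
    have hne : ((k:ℝ)+1) ≠ 0 := by positivity
    have h2k : ((k:ℝ)+(k:ℝ)+2) ≠ 0 := by positivity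
    push_cast
    rw [div_mul_div_comm, div_eq_div_iff (by positivity) (by positivity)]
    push_cast at hcb'
    ring_nf
    ring_nf at hcb'
    nlinarith [hcb', pow_pos (by norm_num : (0:ℝ) < 2) k]
  · have h1 : ¬ Even m := Nat.not_even_iff_odd.mpr hodd
    have h2 : ¬ Even (m+2) := by simpa [Nat.even_add] using h1
    rw [arcA, arcA, if_neg h1, if_neg h2, mul_zero]

open Real in
lemma sin_moment (m : ℕ) :
    (Real.sqrt 2)^m / π * ∫ x in (-(π/2))..(π/2), Real.sin x ^ m = arcA m := by
  induction m using Nat.twoStepInduction with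
  | zero =>
    simp only [pow_zero, integral_one, arcA]
    rw [if_pos Even.zero]
    have hpi := Real.pi_pos
    norm_num
    try ring
  | one =>
    simp only [pow_one, integral_sin, Real.cos_pi_div_two, Real.cos_neg]
    simp [arcA]
  | more m ih _ =>
    rw [integral_sin_pow, arcA_step, ← ih]
    have hc : Real.cos (π/2) = 0 := Real.cos_pi_div_two
    have hc' : Real.cos (-(π/2)) = 0 := by rw [Real.cos_neg]; exact hc
    rw [hc, hc', mul_zero, mul_zero, sub_zero, zero_div, zero_add]
    have hs : (Real.sqrt 2)^(m+2) = 2 * (Real.sqrt 2)^m := by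
      rw [pow_add, Real.sq_sqrt (by norm_num : (0:ℝ) ≤ 2)]; ring
    rw [hs]
    push_cast
    ring


/-- The moments of the two-sided Jacobi matrix with `ω ≡ 1/2`, `α ≡ 0`
(i.e. `X̃ e_n = (e_{n+1} + e_{n−1})/√2`) at the state `⟨· e_0, e_0⟩` are exactly the
moments of the arcsine law. -/
theorem twoSided_free_jacobi_moments_arcsine (m : ℕ) :
    ((jacobiOpZ (fun _ => 1 / 2) (fun _ => 0) ^ m) (Finsupp.single (0 : ℤ) 1)) 0 =
      ∫ x in (-Real.sqrt 2)..(Real.sqrt 2), x ^ m / (Real.pi * Real.sqrt (2 - x ^ 2)) := by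
  rw [lhs_eq, rhs_transform, sin_moment]
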